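/- For every v ∈ ℝ³ and every i, j ∈ {1,2,3}, the function v* ↦ Φ_{ij}(v − v*)·μ(v*) is Lebesgue integrable on ℝ³, so the Landau collision frequency σ^{ij}(v) := ∫_{ℝ³} Φ_{ij}(v − v*)·μ(v*) dv* is well defined. Moreover, for each v ∈ ℝ³ the matrix (σ^{ij}(v))_{1≤i,j≤3} is symmetric and positive definite: for every w ∈ ℝ³ with w ≠ 0 one has Σ_{i,j} σ^{ij}(v)·w_i·w_j > 0. -/

import Mathlib

/-! The kernel is bounded by `2 / |z|`, which is locally integrable in dimension three, while the
Maxwellian is bounded and integrable.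

For `z ≠ 0`, `Φ(z)` is `|z|⁻¹` times the orthogonal projection onto `z^⊥`, so
`∑ Φ_{ij}(z) w_i w_j = |z|⁻¹ (|w|² - ⟪z, w⟫² / |z|²)`, which by the equality case of
Cauchy–Schwarz is positive unless `z ∈ ℝ w`. Since a line is Lebesgue-null, the quadratic form of
`σ(v)` is the integral of an almost everywhere positive function. -/

open MeasureTheory
open scoped Classical

/-- The Landau collision kernel for Coulomb interactions,
`Φ_{ij}(z) = |z|⁻¹ (δ_{ij} − z_i z_j / |z|²)` for `z ≠ 0`, with `Φ_{ij}(0) = 0`. -/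
noncomputable def LandauKernel (z : EuclideanSpace ℝ (Fin 3)) (i j : Fin 3) : ℝ :=
  if z = 0 then 0
  else ‖z‖⁻¹ * ((if i = j then (1 : ℝ) else 0) - z i * z j / ‖z‖ ^ 2)

/-- The global Maxwellian `μ(v) = (2π)^{−3/2} exp(−|v|²/2)`. -/
noncomputable def globalMaxwellian (v : EuclideanSpace ℝ (Fin 3)) : ℝ :=
  (2 * Real.pi) ^ (-(3 : ℝ) / 2) * Real.exp (-‖v‖ ^ 2 / 2)

open Set Metric Module
open scoped RealInnerProductSpace

section FiniteDimensional

variable {E : Type*} [NormedAddCommGroup E] [NormedSpace ℝ E] [FiniteDimensional ℝ E]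
  [MeasurableSpace E] [BorelSpace E] {μ : Measure E} [μ.IsAddHaarMeasure]

/-- On the unit ball `f` is integrable (as `α < dim E`) and `g` is bounded; off it `f` is
bounded and `g` is integrable. -/
theorem integrable_mul_of_norm_le_rpow (hd : 1 ≤ finrank ℝ E) {f g : E → ℝ} {α C D : ℝ}
    (hα₀ : 0 ≤ α) (hα : α < finrank ℝ E) (hf : ∀ x, ‖f x‖ ≤ C * ‖x‖ ^ (-α))
    (hf_meas : AEStronglyMeasurable f μ) (hg : Integrable g μ) (hg_bdd : ∀ x, ‖g x‖ ≤ D) :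
    Integrable (fun x ↦ f x * g x) μ := by
  have hfg_meas : AEStronglyMeasurable (fun x ↦ f x * g x) μ :=
    hf_meas.mul hg.aestronglyMeasurable
  rw [← integrableOn_univ, ← union_compl_self (ball (0 : E) 1), integrableOn_union]
  constructor
  · refine integrableOn_ball_of_norm_le_rpow (C := C * D) hd hα (ae_of_all _ fun x ↦ ?_) hfg_meas
    rw [norm_mul, mul_right_comm]
    exact mul_le_mul (hf x) (hg_bdd x) (norm_nonneg _) ((norm_nonneg _).trans (hf x))
  · refine (hg.norm.const_mul |C|).integrableOn.mono' hfg_meas.restrict ?_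
    filter_upwards [ae_restrict_mem measurableSet_ball.compl] with x hx
    have hx1 : ‖x‖ ^ (-α) ≤ 1 :=
      Real.rpow_le_one_of_one_le_of_nonpos (by simpa using hx) (neg_nonpos.2 hα₀)
    have hf_le : ‖f x‖ ≤ |C| := calc
      ‖f x‖ ≤ C * ‖x‖ ^ (-α) := hf x
      _ ≤ |C| * ‖x‖ ^ (-α) := by gcongr; exact le_abs_self C
      _ ≤ |C| := mul_le_of_le_one_right (abs_nonneg C) hx1
    rw [norm_mul]
    exact mul_le_mul_of_nonneg_right hf_le (norm_nonneg _)

lemma ae_sub_notMem_submodule {S : Submodule ℝ E} (hS : S ≠ ⊤) (v : E) :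
    ∀ᵐ u ∂μ, v - u ∉ S :=
  (Measure.measurePreserving_sub_left μ v).quasiMeasurePreserving.ae
    (measure_eq_zero_iff_ae_notMem.1 (Measure.addHaar_submodule μ S hS))

end FiniteDimensional

lemma integral_pos_of_ae_pos {α : Type*} [MeasurableSpace α] {μ : Measure α} [NeZero μ]
    {f : α → ℝ} (hfi : Integrable f μ) (hf : ∀ᵐ x ∂μ, 0 < f x) : 0 < ∫ x, f x ∂μ := by
  rw [integral_pos_iff_support_of_nonneg_ae (hf.mono fun _ hx ↦ hx.le) hfi, pos_iff_ne_zero]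
  intro h
  obtain ⟨x, hx, hx₀⟩ := ((measure_eq_zero_iff_ae_notMem.1 h).and hf).exists
  exact hx hx₀.ne'

lemma real_inner_sq_lt_of_notMem_span {F : Type*} [NormedAddCommGroup F] [InnerProductSpace ℝ F]
    {z w : F} (hw : w ≠ 0) (hz : z ∉ Submodule.span ℝ {w}) :
    ⟪z, w⟫ ^ 2 < ‖z‖ ^ 2 * ‖w‖ ^ 2 := by
  have hz₀ : z ≠ 0 := fun h ↦ hz (h ▸ Submodule.zero_mem _)
  rw [← mul_pow, ← sq_abs]
  refine pow_lt_pow_left₀ ((abs_real_inner_le_norm z w).lt_of_ne fun h ↦ hz ?_) (abs_nonneg _)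
    two_ne_zero
  obtain ⟨r, -, rfl⟩ := (norm_inner_eq_norm_iff hw hz₀).1 (by
    rw [real_inner_comm, Real.norm_eq_abs, h, mul_comm])
  exact Submodule.smul_mem _ r (Submodule.mem_span_singleton_self w)

lemma measurable_landauKernel (i j : Fin 3) : Measurable fun z ↦ LandauKernel z i j := by
  unfold LandauKernel
  exact Measurable.ite (measurableSet_singleton 0) measurable_const (by fun_prop)

lemma landauKernel_comm (z : EuclideanSpace ℝ (Fin 3)) (i j : Fin 3) :
    LandauKernel z i j = LandauKernel z j i := by
  simp only [LandauKernel, eq_comm (a := i), mul_comm (z i)]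

lemma abs_landauKernel_le (z : EuclideanSpace ℝ (Fin 3)) (i j : Fin 3) :
    |LandauKernel z i j| ≤ 2 * ‖z‖ ^ (-1 : ℝ) := by
  rw [Real.rpow_neg_one]
  by_cases hz : z = 0
  · simp [LandauKernel, hz]
  have hz' : 0 < ‖z‖ := norm_pos_iff.2 hz
  have hδ : |(if i = j then (1 : ℝ) else 0)| ≤ 1 := by split_ifs <;> norm_num
  have hzz : |z i * z j / ‖z‖ ^ 2| ≤ 1 := by
    rw [abs_div, abs_mul, abs_of_pos (pow_pos hz' 2), div_le_one (pow_pos hz' 2), sq]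
    simpa only [Real.norm_eq_abs] using
      mul_le_mul (PiLp.norm_apply_le z i) (PiLp.norm_apply_le z j) (norm_nonneg _) hz'.le
  rw [LandauKernel, if_neg hz, abs_mul, abs_inv, abs_norm, mul_comm 2]
  gcongr
  linarith [abs_sub _ _ |>.trans (add_le_add hδ hzz)]

lemma landauKernel_quadForm {z : EuclideanSpace ℝ (Fin 3)} (hz : z ≠ 0)
    (w : EuclideanSpace ℝ (Fin 3)) :
    ∑ i, ∑ j, LandauKernel z i j * w i * w j = ‖z‖⁻¹ * (‖w‖ ^ 2 - ⟪z, w⟫ ^ 2 / ‖z‖ ^ 2) := by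
  simp only [LandauKernel, if_neg hz, EuclideanSpace.real_norm_sq_eq w,
    EuclideanSpace.inner_eq_star_dotProduct, dotProduct, Fin.sum_univ_three, Fin.isValue,
    Fin.reduceEq, ↓reduceIte, Pi.star_apply, star_trivial]
  ring

lemma landauKernel_quadForm_pos {z w : EuclideanSpace ℝ (Fin 3)} (hw : w ≠ 0)
    (hz : z ∉ Submodule.span ℝ {w}) : 0 < ∑ i, ∑ j, LandauKernel z i j * w i * w j := by
  have hz₀ : z ≠ 0 := fun h ↦ hz (h ▸ Submodule.zero_mem _)
  have hz' : 0 < ‖z‖ := norm_pos_iff.2 hz₀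
  have hCS : 0 < ‖w‖ ^ 2 * ‖z‖ ^ 2 - ⟪z, w⟫ ^ 2 := by
    linarith [real_inner_sq_lt_of_notMem_span hw hz]
  rw [landauKernel_quadForm hz₀, sub_div' (pow_pos hz' 2).ne']
  positivity

lemma globalMaxwellian_pos (v : EuclideanSpace ℝ (Fin 3)) : 0 < globalMaxwellian v := by
  unfold globalMaxwellian
  positivity

lemma globalMaxwellian_le (v : EuclideanSpace ℝ (Fin 3)) :
    globalMaxwellian v ≤ (2 * Real.pi) ^ (-(3 : ℝ) / 2) := by
  unfold globalMaxwellian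
  refine mul_le_of_le_one_right (by positivity) (Real.exp_le_one_iff.2 ?_)
  linarith [sq_nonneg ‖v‖]

lemma integrable_globalMaxwellian : Integrable globalMaxwellian := by
  have h := (GaussianFourier.integrable_cexp_neg_mul_sq_norm_add
    (V := EuclideanSpace ℝ (Fin 3)) (b := 1 / 2) (by norm_num) 0 0).norm.const_mul
    ((2 * Real.pi) ^ (-(3 : ℝ) / 2))
  refine h.congr (ae_of_all _ fun v ↦ ?_)
  have hexp : -(1 / 2 : ℂ) * (‖v‖ : ℂ) ^ 2 = ((-‖v‖ ^ 2 / 2 : ℝ) : ℂ) := by push_cast; ring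
  simp only [zero_mul, add_zero, hexp, Complex.norm_exp_ofReal, globalMaxwellian]

theorem integrable_landauKernel_mul_globalMaxwellian (v : EuclideanSpace ℝ (Fin 3)) (i j : Fin 3) :
    Integrable fun w ↦ LandauKernel (v - w) i j * globalMaxwellian w := by
  have h : Integrable fun z ↦ LandauKernel z i j * globalMaxwellian (v - z) :=
    integrable_mul_of_norm_le_rpow (by simp) zero_le_one (by simp) (abs_landauKernel_le · i j)
      (measurable_landauKernel i j).aestronglyMeasurable
      ((integrable_comp_sub_left globalMaxwellian v).2 integrable_globalMaxwellian)
      (fun z ↦ (abs_of_pos (globalMaxwellian_pos _)).trans_le (globalMaxwellian_le _))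
  simpa using (integrable_comp_sub_left _ v).2 h

noncomputable def landauCollisionFrequency (v : EuclideanSpace ℝ (Fin 3)) (i j : Fin 3) : ℝ :=
  ∫ u, LandauKernel (v - u) i j * globalMaxwellian u

lemma landauCollisionFrequency_comm (v : EuclideanSpace ℝ (Fin 3)) (i j : Fin 3) :
    landauCollisionFrequency v i j = landauCollisionFrequency v j i := by
  simp only [landauCollisionFrequency, landauKernel_comm _ i j]

lemma sum_landauCollisionFrequency_mul (v w : EuclideanSpace ℝ (Fin 3)) :
    ∑ i, ∑ j, landauCollisionFrequency v i j * w i * w j =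
      ∫ u, (∑ i, ∑ j, LandauKernel (v - u) i j * w i * w j) * globalMaxwellian u := by
  have hint (i j : Fin 3) :
      Integrable fun u ↦ LandauKernel (v - u) i j * globalMaxwellian u * (w i * w j) :=
    (integrable_landauKernel_mul_globalMaxwellian v i j).mul_const _
  calc ∑ i, ∑ j, landauCollisionFrequency v i j * w i * w j
      = ∑ i, ∑ j, ∫ u, LandauKernel (v - u) i j * globalMaxwellian u * (w i * w j) := by
        simp only [landauCollisionFrequency, mul_assoc, ← integral_mul_const]
    _ = ∫ u, ∑ i, ∑ j, LandauKernel (v - u) i j * globalMaxwellian u * (w i * w j) := by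
        rw [integral_finsetSum _ fun i _ ↦ integrable_finsetSum _ fun j _ ↦ hint i j]
        exact Finset.sum_congr rfl fun i _ ↦ (integral_finsetSum _ fun j _ ↦ hint i j).symm
    _ = ∫ u, (∑ i, ∑ j, LandauKernel (v - u) i j * w i * w j) * globalMaxwellian u := by
        simp only [Finset.sum_mul]
        exact integral_congr_ae (ae_of_all _ fun u ↦
          Finset.sum_congr rfl fun i _ ↦ Finset.sum_congr rfl fun j _ ↦ by ring)

lemma integrable_landauKernel_quadForm_mul_globalMaxwellian (v w : EuclideanSpace ℝ (Fin 3)) :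
    Integrable fun u ↦
      (∑ i, ∑ j, LandauKernel (v - u) i j * w i * w j) * globalMaxwellian u := by
  simp only [Finset.sum_mul]
  refine integrable_finsetSum _ fun i _ ↦ integrable_finsetSum _ fun j _ ↦ ?_
  exact ((integrable_landauKernel_mul_globalMaxwellian v i j).mul_const (w i * w j)).congr
    (ae_of_all _ fun u ↦ by ring)

lemma landauCollisionFrequency_quadForm_pos (v : EuclideanSpace ℝ (Fin 3))
    {w : EuclideanSpace ℝ (Fin 3)} (hw : w ≠ 0) :
    0 < ∑ i, ∑ j, landauCollisionFrequency v i j * w i * w j := by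
  have hline : Submodule.span ℝ {w} ≠ ⊤ := fun h ↦ by
    have := finrank_span_singleton (K := ℝ) hw
    rw [h, finrank_top, finrank_euclideanSpace_fin] at this
    omega
  rw [sum_landauCollisionFrequency_mul]
  exact integral_pos_of_ae_pos (integrable_landauKernel_quadForm_mul_globalMaxwellian v w)
    ((ae_sub_notMem_submodule hline v).mono fun u hu ↦
      mul_pos (landauKernel_quadForm_pos hw hu) (globalMaxwellian_pos u))

/-- Well-definedness, symmetry and positive definiteness of the Landau collision
frequency `σ^{ij}(v) = ∫ Φ_{ij}(v − v⋆) μ(v⋆) dv⋆`. -/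
theorem landau_collision_frequency_posdef :
    (∀ (v : EuclideanSpace ℝ (Fin 3)) (i j : Fin 3),
      Integrable (fun w : EuclideanSpace ℝ (Fin 3) =>
        LandauKernel (v - w) i j * globalMaxwellian w)) ∧
    ∀ v : EuclideanSpace ℝ (Fin 3),
      (∀ i j : Fin 3,
        (∫ w : EuclideanSpace ℝ (Fin 3),
            LandauKernel (v - w) i j * globalMaxwellian w)
          = ∫ w : EuclideanSpace ℝ (Fin 3),
              LandauKernel (v - w) j i * globalMaxwellian w) ∧
      ∀ w : EuclideanSpace ℝ (Fin 3), w ≠ 0 →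
        0 < ∑ i : Fin 3, ∑ j : Fin 3,
          (∫ u : EuclideanSpace ℝ (Fin 3),
            LandauKernel (v - u) i j * globalMaxwellian u) * w i * w j :=
  ⟨integrable_landauKernel_mul_globalMaxwellian, fun v ↦
    ⟨landauCollisionFrequency_comm v, fun _ hw ↦ landauCollisionFrequency_quadForm_pos v hw⟩⟩
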